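/- arXiv:2505.08968 — 4 statements merged into one kernel-verified Lean document; each statement's English description precedes it below -/
import Mathlib

section
/- Let A be a C*-algebra, let a ∈ A, and let g be a local unit for a. Then for every continuous function f : ℝ → ℝ with f(0) = 0 and f(1) = 1, the element f(g) obtained by applying the non-unital continuous functional calculus to the self-adjoint element g is again a local unit for a. In particular, taking f(t) = min(max(t,0),1), every element of A possessing a local unit possesses a local unit g' with 0 ≤ g' ≤ 1. -/
open scoped ComplexOrder

/-- `g` is a local unit for `a`: `g` is self-adjoint and `a * g = g * a = a`. -/
def IsLocalUnit {A : Type*} [NonUnitalRing A] [StarRing A] (g a : A) : Prop :=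
  IsSelfAdjoint g ∧ a * g = a ∧ g * a = a

/-- A state on a C*-algebra: a positive linear functional of norm 1. -/
def IsState {A : Type*} [NonUnitalCStarAlgebra A] [PartialOrder A] [StarOrderedRing A]
    (φ : A →L[ℂ] ℂ) : Prop :=
  ‖φ‖ = 1 ∧ ∀ a : A, 0 ≤ a → 0 ≤ φ a

/-!
If `g * b = r • b`, then `q(g) * b = q(r) • b` for every polynomial `q` without constant term;
such polynomials are dense in `C(σₙ(g), ℝ)₀` by Stone–Weierstrass and the functional calculus is
continuous, so `f(g) * b = f(r) • b` for every admissible `f`. For a local unit `g` of `a` this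
applies with `r = 1` to `b = a` and, taking adjoints, to `b = a⋆`. Clamping to `[0, 1]` then
produces a positive local unit of norm at most `1`.
-/

lemma mem_quasispectrum_of_mul_eq_smul {𝕜 A : Type*} [Field 𝕜] [NonUnitalRing A] [Module 𝕜 A]
    [IsScalarTower 𝕜 A A] {g b : A} {r : 𝕜} (hb : b ≠ 0) (hgb : g * b = r • b) :
    r ∈ quasispectrum 𝕜 g := by
  rcases eq_or_ne r 0 with rfl | hr
  · exact quasispectrum.zero_mem 𝕜 g
  refine quasispectrum.mem_of_not_quasiregular g (r := Units.mk0 r hr) fun hq ↦ hb ?_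
  obtain ⟨y, -, hy⟩ := isQuasiregular_iff.mp hq
  have hxb : -((Units.mk0 r hr)⁻¹ • g) * b = -b := by
    rw [neg_mul, smul_mul_assoc, hgb, Units.smul_def, smul_smul]
    simp [hr]
  have := congr($hy * b)
  rwa [add_mul, add_mul, mul_assoc, hxb, mul_neg, add_neg_cancel_right, zero_mul, neg_eq_zero]
    at this

open scoped ContinuousMapZero NonUnitalContinuousFunctionalCalculus

section Eigenvector

variable {A : Type*} {p : A → Prop} [NonUnitalRing A] [StarRing A] [TopologicalSpace A]
  [ContinuousMul A] [T2Space A] [Module ℝ A] [ContinuousSMul ℝ A] [IsScalarTower ℝ A A]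
  [SMulCommClass ℝ A A] [NonUnitalContinuousFunctionalCalculus ℝ A p]

lemma cfcₙHom_mul_of_mul_eq_smul {g b : A} (hg : p g) {r : ℝ} (hr : r ∈ quasispectrum ℝ g)
    (hgb : g * b = r • b) (φ : C(quasispectrum ℝ g, ℝ)₀) : cfcₙHom hg φ * b = φ ⟨r, hr⟩ • b := by
  have hclosed : IsClosed {φ : C(quasispectrum ℝ g, ℝ)₀ | cfcₙHom hg φ * b = φ ⟨r, hr⟩ • b} :=
    isClosed_eq ((continuous_mul_const b).comp (cfcₙHom_continuous hg))
      ((continuous_eval_const _).smul continuous_const)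
  induction φ using ContinuousMapZero.induction_on_of_compact with
  | zero => simp
  | id => simpa [cfcₙHom_id hg] using hgb
  | star_id => simpa [cfcₙHom_id hg] using hgb
  | add φ ψ hφ hψ => simp [add_mul, hφ, hψ, add_smul]
  | mul φ ψ hφ hψ => simp [mul_assoc, hψ, mul_smul_comm, hφ, smul_smul, mul_comm]
  | smul c φ hφ => simp [smul_mul_assoc, hφ, smul_smul]
  | frequently φ hφ => exact hclosed.mem_of_frequently_of_tendsto hφ Filter.tendsto_id

lemma cfcₙ_mul_of_mul_eq_smul {f : ℝ → ℝ} {g b : A} {r : ℝ} (hgb : g * b = r • b)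
    (hf : ContinuousOn f (quasispectrum ℝ g) := by cfc_cont_tac) (hf0 : f 0 = 0 := by cfc_zero_tac)
    (hg : p g := by cfc_tac) : cfcₙ f g * b = f r • b := by
  rcases eq_or_ne b 0 with rfl | hb
  · simp
  rw [cfcₙ_apply f g hf hf0 hg,
    cfcₙHom_mul_of_mul_eq_smul hg (mem_quasispectrum_of_mul_eq_smul hb hgb) hgb]
  rfl

end Eigenvector

lemma mul_cfcₙ_of_mul_eq_smul {A : Type*} [NonUnitalRing A] [StarRing A] [TopologicalSpace A]
    [ContinuousMul A] [T2Space A] [Module ℝ A] [ContinuousSMul ℝ A] [IsScalarTower ℝ A A]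
    [SMulCommClass ℝ A A] [StarModule ℝ A]
    [NonUnitalContinuousFunctionalCalculus ℝ A IsSelfAdjoint] {f : ℝ → ℝ} {g b : A} {r : ℝ}
    (hbg : b * g = r • b) (hf : ContinuousOn f (quasispectrum ℝ g) := by cfc_cont_tac)
    (hf0 : f 0 = 0 := by cfc_zero_tac) (hg : IsSelfAdjoint g := by cfc_tac) :
    b * cfcₙ f g = f r • b := by
  have hgb : g * star b = r • star b := by
    rw [← hg.star_eq, ← star_mul, hbg, star_smul, star_trivial]
  rw [← star_star (b * _), star_mul, (cfcₙ_predicate f g).star_eq,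
    cfcₙ_mul_of_mul_eq_smul hgb, star_smul, star_trivial, star_star]

/-- If `g` is a local unit for `a`, then for every continuous `f : ℝ → ℝ` with
`f 0 = 0` and `f 1 = 1`, the element `f(g)` (non-unital continuous functional calculus)
is again a local unit for `a`; in particular `a` has a local unit `g'` with `0 ≤ g' ≤ 1`
(equivalently, `0 ≤ g'` and `‖g'‖ ≤ 1`, since `A` may lack a unit). -/
theorem localUnit_cfc {A : Type*} [NonUnitalCStarAlgebra A] [PartialOrder A]
    [StarOrderedRing A] (a g : A) (hg : IsLocalUnit g a) :
    (∀ f : ℝ → ℝ, Continuous f → f 0 = 0 → f 1 = 1 → IsLocalUnit (cfcₙ f g) a) ∧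
    ∃ g' : A, IsLocalUnit g' a ∧ 0 ≤ g' ∧ ‖g'‖ ≤ 1 := by
  obtain ⟨hg, hag, hga⟩ := hg
  have cfcₙ_isLocalUnit (f : ℝ → ℝ) (hf : Continuous f) (hf0 : f 0 = 0) (hf1 : f 1 = 1) :
      IsLocalUnit (cfcₙ f g) a := by
    refine ⟨cfcₙ_predicate f g, ?_, ?_⟩
    · rw [mul_cfcₙ_of_mul_eq_smul (r := 1) (by rwa [one_smul]), hf1, one_smul]
    · rw [cfcₙ_mul_of_mul_eq_smul (r := 1) (by rwa [one_smul]), hf1, one_smul]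
  refine ⟨cfcₙ_isLocalUnit, cfcₙ (fun t ↦ min (max t 0) 1) g,
    cfcₙ_isLocalUnit _ (by fun_prop) (by norm_num) (by norm_num), ?_, ?_⟩
  · exact cfcₙ_nonneg fun t _ ↦ by positivity
  · refine norm_cfcₙ_le fun t _ ↦ ?_
    rw [Real.norm_eq_abs, abs_le]
    exact ⟨by linarith [le_min (le_max_right t 0) zero_le_one], min_le_right _ _⟩
end

section
/- Let A be a C*-algebra and let (a_j)_{j∈ℕ} be a sequence of positive elements of A. The series Σ_{j=1}^∞ 2^{-j} · a_j/(1+‖a_j‖) converges in norm in A; if g is a local unit for its sum, then g is a local unit for every a_j, j ∈ ℕ. -/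
open scoped ComplexOrder

/-! Each term `c j = 2⁻ʲ (1 + ‖a j‖)⁻¹ • a j` is positive with norm at most `2⁻ʲ`, so the series
converges and `0 ≤ c j ≤ b` for its sum `b`. If `g` is a local unit for `b`, then `b (1 - g) = 0` in
the unitization, and `0 ≤ (1 - g)⋆ c j (1 - g) ≤ (1 - g)⋆ b (1 - g) = 0` forces
`(√(c j)) (1 - g) = 0` by the C⋆-identity, i.e. `c j * g = c j`; taking adjoints gives
`g * c j = c j`, and the positive scalar cancels. -/

section CStarAlgebra

variable {A : Type*} [NonUnitalCStarAlgebra A] [PartialOrder A] [StarOrderedRing A]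

lemma mul_eq_zero_of_star_mul_mul_eq_zero {c x : A} (hc : 0 ≤ c) (hcx : star x * c * x = 0) :
    c * x = 0 := by
  have hd := CFC.sqrt_nonneg c
  have hdd := CFC.sqrt_mul_sqrt_self c hc
  generalize CFC.sqrt c = d at hd hdd
  subst hdd
  have hdx : d * x = 0 := by
    rw [← CStarRing.star_mul_self_eq_zero_iff, star_mul, hd.isSelfAdjoint.star_eq]
    simpa only [mul_assoc] using hcx
  rw [mul_assoc, hdx, mul_zero]

lemma mul_eq_zero_of_le_of_mul_eq_zero {b c x : A} (hc : 0 ≤ c) (hcb : c ≤ b) (hbx : b * x = 0) :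
    c * x = 0 := by
  refine mul_eq_zero_of_star_mul_mul_eq_zero hc (le_antisymm ?_ (star_left_conjugate_nonneg hc x))
  simpa only [mul_assoc, hbx, mul_zero] using star_left_conjugate_le_conjugate hcb x

theorem IsLocalUnit.of_le {g b c : A} (hg : IsLocalUnit g b) (hc : 0 ≤ c) (hcb : c ≤ b) :
    IsLocalUnit g c := by
  obtain ⟨hg_sa, hbg, -⟩ := hg
  have hcg : c * g = c := by
    have hb : 0 ≤ b := hc.trans hcb
    have key : (c : Unitization ℂ A) * (1 - g) = 0 := by
      refine mul_eq_zero_of_le_of_mul_eq_zero (Unitization.inr_nonneg_iff.mpr hc)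
        ((Unitization.inr_le_iff c b hc.isSelfAdjoint hb.isSelfAdjoint).mpr hcb) ?_
      rw [mul_sub, mul_one, ← Unitization.inr_mul ℂ, hbg, sub_self]
    rw [mul_sub, mul_one, sub_eq_zero, ← Unitization.inr_mul ℂ] at key
    exact (Unitization.inr_injective key).symm
  refine ⟨hg_sa, hcg, ?_⟩
  simpa only [star_mul, hg_sa.star_eq, hc.isSelfAdjoint.star_eq] using congrArg star hcg

end CStarAlgebra

theorem IsLocalUnit.of_smul {𝕜 A : Type*} [Field 𝕜] [NonUnitalRing A] [StarRing A] [Module 𝕜 A]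
    [IsScalarTower 𝕜 A A] [SMulCommClass 𝕜 A A] {g a : A} {r : 𝕜} (hr : r ≠ 0)
    (hg : IsLocalUnit g (r • a)) : IsLocalUnit g a := by
  obtain ⟨hg_sa, hag, hga⟩ := hg
  refine ⟨hg_sa, smul_right_injective A hr ?_, smul_right_injective A hr ?_⟩
  · simpa only [smul_mul_assoc] using hag
  · simpa only [mul_smul_comm] using hga

lemma norm_inv_one_add_norm_smul_le_one {E : Type*} [SeminormedAddCommGroup E] [NormedSpace ℝ E]
    (x : E) : ‖(1 + ‖x‖)⁻¹ • x‖ ≤ 1 := by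
  rw [norm_smul, Real.norm_of_nonneg (by positivity), inv_mul_le_one₀ (by positivity)]
  linarith

lemma summable_geometric_two_mul_inv_one_add_norm_smul {E : Type*} [NormedAddCommGroup E]
    [NormedSpace ℝ E] [CompleteSpace E] (x : ℕ → E) :
    Summable (fun j : ℕ => ((1 / 2 ^ j) * (1 + ‖x j‖)⁻¹ : ℝ) • x j) := by
  refine .of_norm_bounded summable_geometric_two fun j => ?_
  rw [mul_smul, norm_smul, ← one_div_pow, Real.norm_of_nonneg (by positivity)]
  exact mul_le_of_le_one_right (by positivity) (norm_inv_one_add_norm_smul_le_one (x j))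

/-- The series `Σ_j 2⁻ʲ • a j / (1 + ‖a j‖)` of positive elements converges in norm,
and a local unit for its sum is a local unit for every `a j`. -/
theorem localUnit_of_tsum {A : Type*} [NonUnitalCStarAlgebra A] [PartialOrder A]
    [StarOrderedRing A] (a : ℕ → A) (ha : ∀ j, 0 ≤ a j) :
    Summable (fun j : ℕ => ((1 / 2 ^ j) * (1 + ‖a j‖)⁻¹ : ℝ) • a j) ∧
    ∀ g : A, IsLocalUnit g (∑' j : ℕ, ((1 / 2 ^ j) * (1 + ‖a j‖)⁻¹ : ℝ) • a j) →
      ∀ j : ℕ, IsLocalUnit g (a j) := by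
  have hsum := summable_geometric_two_mul_inv_one_add_norm_smul a
  have hr : ∀ j, (0 : ℝ) < (1 / 2 ^ j) * (1 + ‖a j‖)⁻¹ := fun j => by positivity
  have hterm : ∀ j, 0 ≤ ((1 / 2 ^ j) * (1 + ‖a j‖)⁻¹ : ℝ) • a j :=
    fun j => smul_nonneg (hr j).le (ha j)
  exact ⟨hsum, fun g hg j =>
    (hg.of_le (hterm j) (hsum.le_tsum j fun i _ => hterm i)).of_smul (hr j).ne'⟩
end

section
/- Let A be a C*-algebra which is non-unital (has no multiplicative identity) but locally unital. Then A contains no thick element; moreover, for every positive element g ∈ A there exists a state φ on A with φ(g) = 0 (that is, A contains no strictly positive element). -/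
open scoped ComplexOrder

/-!
Let `e` be a local unit of `g`. Since `e` is self-adjoint but not an identity, some `x` has
`e * x ≠ x`, and `y = x - e * x` is a nonzero element with `g * y = 0`; so `g` is not thick.
For positive `g`, put `p = y * y⋆`, so that `g * p = p * g = 0`. In the unitization, Hahn–Banach
applied to `‖p‖ + p` gives a functional `ψ` with `‖ψ‖ ≤ 1`, `ψ 1 = 1` and `ψ p = ‖p‖`, and such a
functional is positive. With `c = ‖p‖ - p` one gets `ψ (c * c) = 0` and `c * g * c = ‖p‖ ^ 2 • g`,
hence `0 ≤ ‖p‖ ^ 2 • ψ g ≤ ‖g‖ • ψ (c * c) = 0`. Restricted to `A`, `ψ` is a state vanishing at `g`.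
-/

section LocalUnit

variable {R : Type*} [NonUnitalRing R] [StarRing R]

lemma IsLocalUnit.exists_mul_ne {e a : R} (he : IsLocalUnit e a)
    (hnu : ¬ ∀ x : R, e * x = x ∧ x * e = x) : ∃ x : R, e * x ≠ x := by
  by_contra! h
  refine hnu fun x ↦ ⟨h x, ?_⟩
  simpa [he.1.star_eq] using congrArg star (h (star x))

lemma IsLocalUnit.mul_sub_mul_eq_zero {e a : R} (he : IsLocalUnit e a) (x : R) :
    a * (x - e * x) = 0 := by
  rw [mul_sub, ← mul_assoc, he.2.1, sub_self]

lemma IsLocalUnit.exists_ne_zero_mul_eq_zero {e a : R} (he : IsLocalUnit e a)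
    (hnu : ¬ ∀ x : R, e * x = x ∧ x * e = x) : ∃ y : R, y ≠ 0 ∧ a * y = 0 := by
  obtain ⟨x, hx⟩ := he.exists_mul_ne hnu
  exact ⟨x - e * x, sub_ne_zero.mpr hx.symm, he.mul_sub_mul_eq_zero x⟩

end LocalUnit

open Complex in
lemma IsSelfAdjoint.norm_add_I_smul_one_sq_le {B : Type*} [CStarAlgebra B] [Nontrivial B] {a : B}
    (ha : IsSelfAdjoint a) (n : ℝ) : ‖a + (n * I) • (1 : B)‖ ^ 2 ≤ ‖a‖ ^ 2 + n ^ 2 := by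
  have hstar : star (a + (n * I) • (1 : B)) = a - (n * I) • 1 := by
    simp [ha.star_eq, sub_eq_add_neg]
  have hmul : star (a + (n * I) • (1 : B)) * (a + (n * I) • 1) = a * a + (n ^ 2 : ℂ) • 1 := by
    rw [hstar]
    have hI : ((n : ℂ) * I) * (n * I) = -(n ^ 2 : ℂ) := by ring_nf; rw [I_sq]; ring
    simp only [sub_mul, mul_add, smul_mul_assoc, mul_smul_comm, one_mul, mul_one, smul_sub,
      smul_smul, hI, neg_smul]
    abel
  have h := CStarRing.norm_star_mul_self (x := a + (n * I) • (1 : B))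
  rw [hmul] at h
  calc ‖a + (n * I) • (1 : B)‖ ^ 2 = ‖a * a + (n ^ 2 : ℂ) • (1 : B)‖ := by rw [h, sq]
    _ ≤ ‖a * a‖ + ‖(n ^ 2 : ℂ) • (1 : B)‖ := norm_add_le _ _
    _ ≤ ‖a‖ ^ 2 + n ^ 2 := by
      gcongr
      · exact sq (‖a‖) ▸ norm_mul_le a a
      · simp

lemma Complex.eq_ofReal_of_norm_le_of_le_re {z : ℂ} {r : ℝ} (hz : ‖z‖ ≤ r) (hr : r ≤ z.re) :
    z = r := by
  have hre : z.re = r := le_antisymm ((re_le_norm z).trans hz) hr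
  have him : z.im = 0 := abs_re_eq_norm.mp (by linarith [abs_re_le_norm z, le_abs_self z.re])
  exact Complex.ext (by simp [hre]) (by simp [him])

namespace ContinuousLinearMap

lemma norm_apply_le_of_opNorm_le_one {𝕜 E F : Type*} [NontriviallyNormedField 𝕜]
    [SeminormedAddCommGroup E] [SeminormedAddCommGroup F] [NormedSpace 𝕜 E] [NormedSpace 𝕜 F]
    {f : E →L[𝕜] F} (hf : ‖f‖ ≤ 1) (x : E) : ‖f x‖ ≤ ‖x‖ := by
  simpa using f.le_of_opNorm_le hf x

open Complex

variable {B : Type*} [CStarAlgebra B] [Nontrivial B] {ψ : B →L[ℂ] ℂ}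

lemma im_apply_eq_zero_of_isSelfAdjoint (hψ : ‖ψ‖ ≤ 1) (h1 : ψ 1 = 1) {a : B}
    (ha : IsSelfAdjoint a) : (ψ a).im = 0 := by
  have hbound : ∀ n : ℝ, 2 * n * (ψ a).im ≤ ‖a‖ ^ 2 := by
    intro n
    have happ : ψ (a + (n * I) • 1) = ψ a + n * I := by simp [h1]
    have hle : ‖ψ a + n * I‖ ≤ ‖a + (n * I) • (1 : B)‖ :=
      happ ▸ norm_apply_le_of_opNorm_le_one hψ _
    have hsq : ‖ψ a + n * I‖ ^ 2 = (ψ a).re ^ 2 + ((ψ a).im + n) ^ 2 := by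
      rw [Complex.sq_norm, normSq_apply]; simp; ring
    nlinarith [ha.norm_add_I_smul_one_sq_le n, pow_le_pow_left₀ (norm_nonneg _) hle 2,
      sq_nonneg (ψ a).re, sq_nonneg (ψ a).im]
  by_contra h
  have := hbound ((‖a‖ ^ 2 + 1) / (2 * (ψ a).im))
  rw [mul_comm 2, mul_assoc, div_mul_cancel₀ _ (by simpa using h)] at this
  linarith

variable [PartialOrder B] [StarOrderedRing B]

lemma apply_nonneg_of_nonneg (hψ : ‖ψ‖ ≤ 1) (h1 : ψ 1 = 1) {b : B} (hb : 0 ≤ b) :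
    0 ≤ ψ b := by
  set r := ‖b‖
  have hc : algebraMap ℝ B r - b ∈ Set.Icc 0 (algebraMap ℝ B r) :=
    ⟨sub_nonneg.mpr (IsSelfAdjoint.of_nonneg hb).le_algebraMap_norm_self, sub_le_self _ hb⟩
  have hcn : ‖algebraMap ℝ B r - b‖ ≤ r :=
    ((CStarAlgebra.mem_Icc_algebraMap_iff_norm_le (norm_nonneg b)).mp hc).2
  have happ : ψ (algebraMap ℝ B r - b) = r - ψ b := by
    simp [Algebra.algebraMap_eq_smul_one, h1]
  have hle : ‖(r : ℂ) - ψ b‖ ≤ r :=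
    happ ▸ norm_apply_le_of_opNorm_le_one hψ _ |>.trans hcn
  have him := im_apply_eq_zero_of_isSelfAdjoint hψ h1 (.of_nonneg hb)
  have hre : |r - (ψ b).re| ≤ r := by
    simpa [him] using (abs_re_le_norm _).trans hle
  exact Complex.nonneg_iff.mpr ⟨by linarith [abs_le.mp hre], him.symm⟩

lemma apply_le_apply_of_le (hψ : ‖ψ‖ ≤ 1) (h1 : ψ 1 = 1) {a b : B} (hab : a ≤ b) :
    ψ a ≤ ψ b := by
  simpa using apply_nonneg_of_nonneg hψ h1 (sub_nonneg.mpr hab)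

lemma apply_algebraMap_norm_sub_sq_eq_zero (hψ : ‖ψ‖ ≤ 1) (h1 : ψ 1 = 1) {p : B}
    (hp : IsSelfAdjoint p) (hψp : ψ p = ‖p‖) :
    ψ ((algebraMap ℝ B ‖p‖ - p) * (algebraMap ℝ B ‖p‖ - p)) = 0 := by
  set c := algebraMap ℝ B ‖p‖ - p
  have hc : IsSelfAdjoint c := (IsSelfAdjoint.algebraMap B (.all ‖p‖)).sub hp
  have hexp : ψ (c * c) = ψ (p * p) - (‖p‖ ^ 2 : ℝ) := by
    simp [c, Algebra.algebraMap_eq_smul_one, sub_mul, mul_sub, sq, h1, hψp]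
  have hnonneg : 0 ≤ ψ (c * c) :=
    apply_nonneg_of_nonneg hψ h1 (by simpa [hc.star_eq] using star_mul_self_nonneg c)
  have hre : (ψ (c * c)).re ≤ 0 := by
    have hpp : ‖ψ (p * p)‖ ≤ ‖p‖ ^ 2 :=
      norm_apply_le_of_opNorm_le_one hψ _ |>.trans (sq ‖p‖ ▸ norm_mul_le p p)
    rw [hexp, Complex.sub_re, Complex.ofReal_re]
    linarith [Complex.re_le_norm (ψ (p * p))]
  exact le_antisymm (Complex.le_def.mpr ⟨hre, (Complex.nonneg_iff.mp hnonneg).2.symm⟩) hnonneg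

lemma apply_eq_zero_of_mul_eq_zero (hψ : ‖ψ‖ ≤ 1) (h1 : ψ 1 = 1) {p g : B}
    (hp : IsSelfAdjoint p) (hp0 : p ≠ 0) (hψp : ψ p = ‖p‖) (hg : 0 ≤ g) (hgp : g * p = 0) :
    ψ g = 0 := by
  set c := algebraMap ℝ B ‖p‖ - p
  have hc : IsSelfAdjoint c := (IsSelfAdjoint.algebraMap B (.all ‖p‖)).sub hp
  have hpg : p * g = 0 := by
    simpa [hp.star_eq, (IsSelfAdjoint.of_nonneg hg).star_eq] using congrArg star hgp
  have hcg : c * g = ‖p‖ • g := by simp [c, Algebra.algebraMap_eq_smul_one, sub_mul, hpg]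
  have hgc : g * c = ‖p‖ • g := by simp [c, Algebra.algebraMap_eq_smul_one, mul_sub, hgp]
  have hcgc : star c * g * c = (‖p‖ ^ 2 : ℝ) • g := by
    rw [hc.star_eq, hcg, smul_mul_assoc, hgc, smul_smul, sq]
  have hcc : ψ (c * c) = 0 := apply_algebraMap_norm_sub_sq_eq_zero hψ h1 hp hψp
  have hupper : ψ (star c * g * c) ≤ 0 := by
    simpa [hc.star_eq, hcc] using
      apply_le_apply_of_le hψ h1 (CStarAlgebra.star_left_conjugate_le_norm_smul (a := c) (b := g))
  have hlower : 0 ≤ ψ (star c * g * c) :=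
    apply_nonneg_of_nonneg hψ h1 (star_left_conjugate_nonneg hg c)
  have : (‖p‖ ^ 2 : ℝ) • ψ g = 0 := by
    rw [← map_smul_of_tower, ← hcgc]; exact le_antisymm hupper hlower
  exact (smul_eq_zero.mp this).resolve_left (by positivity)

end ContinuousLinearMap

lemma CStarAlgebra.exists_unital_contraction_apply_eq_norm {B : Type*} [CStarAlgebra B]
    [PartialOrder B] [StarOrderedRing B] {p : B} (hp : 0 ≤ p) (hp0 : p ≠ 0) :
    ∃ ψ : B →L[ℂ] ℂ, ‖ψ‖ ≤ 1 ∧ ψ 1 = 1 ∧ ψ p = ‖p‖ := by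
  have : Nontrivial B := ⟨⟨p, 0, hp0⟩⟩
  set t := ‖p‖
  have ht : 0 < t := norm_pos_iff.mpr hp0
  obtain ⟨ψ, hψ, hψx⟩ := exists_dual_vector'' ℂ (algebraMap ℝ B t + p)
  have hx : t + t ≤ ‖algebraMap ℝ B t + p‖ := by
    have hmem : t + t ∈ spectrum ℝ (algebraMap ℝ B t + p) := by
      rw [← spectrum.singleton_add_eq]
      exact Set.add_mem_add rfl (CStarAlgebra.norm_mem_spectrum_of_nonneg hp)
    simpa [abs_of_pos (add_pos ht ht)] using spectrum.norm_le_norm_of_mem hmem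
  have hx' : ψ (algebraMap ℝ B t + p) = t * ψ 1 + ψ p := by
    simp [Algebra.algebraMap_eq_smul_one]
  have h1 : ‖ψ 1‖ ≤ 1 := by
    simpa using ψ.norm_apply_le_of_opNorm_le_one hψ 1
  have hpn : ‖ψ p‖ ≤ t := ψ.norm_apply_le_of_opNorm_le_one hψ p
  have hre : t * (ψ 1).re + (ψ p).re = ‖algebraMap ℝ B t + p‖ := by
    simpa using congrArg Complex.re (hx'.symm.trans hψx)
  have hre1 := (Complex.re_le_norm (ψ 1)).trans h1
  have hrep := (Complex.re_le_norm (ψ p)).trans hpn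
  refine ⟨ψ, hψ, ?_, Complex.eq_ofReal_of_norm_le_of_le_re hpn (by nlinarith)⟩
  exact_mod_cast Complex.eq_ofReal_of_norm_le_of_le_re h1 (by nlinarith)

def Unitization.inrCLM (𝕜 A : Type*) [NontriviallyNormedField 𝕜] [NonUnitalNormedRing A]
    [NormedSpace 𝕜 A] [IsScalarTower 𝕜 A A] [SMulCommClass 𝕜 A A] [RegularNormedAlgebra 𝕜 A] :
    A →L[𝕜] Unitization 𝕜 A :=
  ⟨Unitization.inrHom 𝕜 𝕜 A, Unitization.continuous_inr⟩

@[simp]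
lemma Unitization.inrCLM_apply (𝕜 : Type*) {A : Type*} [NontriviallyNormedField 𝕜]
    [NonUnitalNormedRing A] [NormedSpace 𝕜 A] [IsScalarTower 𝕜 A A] [SMulCommClass 𝕜 A A]
    [RegularNormedAlgebra 𝕜 A] (a : A) : Unitization.inrCLM 𝕜 A a = a :=
  rfl

lemma isState_comp_inrCLM {A : Type*} [NonUnitalCStarAlgebra A] [PartialOrder A]
    [StarOrderedRing A] {ψ : Unitization ℂ A →L[ℂ] ℂ} (hψ : ‖ψ‖ ≤ 1) (h1 : ψ 1 = 1) {p : A}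
    (hp0 : p ≠ 0) (hψp : ψ p = ‖p‖) : IsState (ψ.comp (Unitization.inrCLM ℂ A)) := by
  refine ⟨le_antisymm ?_ ?_, fun a ha ↦ ?_⟩
  · refine ContinuousLinearMap.opNorm_le_bound _ zero_le_one fun a ↦ ?_
    simpa [Unitization.norm_inr] using
      ψ.norm_apply_le_of_opNorm_le_one hψ (a : Unitization ℂ A)
  · simpa [hψp, div_self (norm_ne_zero_iff.mpr hp0)] using
      (ψ.comp (Unitization.inrCLM ℂ A)).ratio_le_opNorm p
  · exact ψ.apply_nonneg_of_nonneg hψ h1 (Unitization.inr_nonneg_iff.mpr ha)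

/-- A non-unital, locally unital C*-algebra has no thick element, and no strictly
positive element: every positive element is annihilated by some state. -/
theorem no_thick_no_strictlyPositive {A : Type*} [NonUnitalCStarAlgebra A]
    [PartialOrder A] [StarOrderedRing A]
    (hnu : ¬ ∃ e : A, ∀ x : A, e * x = x ∧ x * e = x)
    (hlu : ∀ a : A, ∃ g : A, IsLocalUnit g a) :
    (∀ g : A, ¬ ∀ x : A, g * x = 0 → x = 0) ∧
    (∀ g : A, 0 ≤ g → ∃ φ : A →L[ℂ] ℂ, IsState φ ∧ φ g = 0) := by
  have hann (g : A) : ∃ y : A, y ≠ 0 ∧ g * y = 0 :=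
    let ⟨e, he⟩ := hlu g
    he.exists_ne_zero_mul_eq_zero fun h ↦ hnu ⟨e, h⟩
  refine ⟨fun g hthick ↦ ?_, fun g hg ↦ ?_⟩
  · obtain ⟨y, hy, hgy⟩ := hann g
    exact hy (hthick y hgy)
  obtain ⟨y, hy, hgy⟩ := hann g
  set p := y * star y
  have hp0 : p ≠ 0 := (CStarRing.mul_star_self_ne_zero_iff y).mpr hy
  have hp0' : (p : Unitization ℂ A) ≠ 0 := by
    rwa [← Unitization.inr_zero ℂ, Ne, Unitization.inr_injective.eq_iff]
  have hp : 0 ≤ (p : Unitization ℂ A) := Unitization.inr_nonneg_iff.mpr (mul_star_self_nonneg y)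
  have hgp : (g * p : Unitization ℂ A) = 0 := by
    rw [← Unitization.inr_mul, ← mul_assoc, hgy, zero_mul, Unitization.inr_zero]
  obtain ⟨ψ, hψ, h1, hψp⟩ :=
    CStarAlgebra.exists_unital_contraction_apply_eq_norm hp hp0'
  refine ⟨ψ.comp (Unitization.inrCLM ℂ A), isState_comp_inrCLM hψ h1 hp0 ?_, ?_⟩
  · rwa [Unitization.norm_inr] at hψp
  · exact ψ.apply_eq_zero_of_mul_eq_zero hψ h1 (.of_nonneg hp) hp0' hψp
      (Unitization.inr_nonneg_iff.mpr hg) hgp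
end

section
/- Let A be a C*-algebra and let (φ_m)_{m∈ℕ} be a sequence of states on A. Then there exists a positive element g ∈ A which is a support of every φ_m, i.e. for every m ∈ ℕ and every x ∈ A, gx = 0 implies φ_m(x) = 0. -/
open scoped ComplexOrder

/-!
Choose supports `a m` of the states `φ m` and put `g := ∑ cₘ • a m` with `cₘ := 2⁻ᵐ / (1 + ‖a m‖)`,
a norm-convergent series of positive elements. If `g * x = 0`, then
`0 ≤ x⋆ (cₘ • a m) x ≤ x⋆ g x = 0`, and in a C*-algebra `x⋆ b x = 0` with `0 ≤ b` forces
`b * x = 0`, because `(√b x)⋆ (√b x) = x⋆ b x`. Hence `a m * x = 0`, so `φ m x = 0`.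
-/

lemma summable_geometric_normalized_smul {E : Type*} [NormedAddCommGroup E] [NormedSpace ℝ E]
    [CompleteSpace E] (a : ℕ → E) :
    Summable fun m => ((1 / 2 : ℝ) ^ m / (1 + ‖a m‖)) • a m := by
  refine .of_norm_bounded (g := fun m => (1 / 2 : ℝ) ^ m)
    (summable_geometric_of_lt_one (by norm_num) (by norm_num)) fun m => ?_
  have hpos : 0 < 1 + ‖a m‖ := by positivity
  rw [norm_smul, Real.norm_of_nonneg (by positivity), div_mul_eq_mul_div,
    div_le_iff₀ hpos]
  gcongr
  linarith

section CStarAlgebra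

variable {A : Type*} [NonUnitalCStarAlgebra A] [PartialOrder A] [StarOrderedRing A]

lemma mul_eq_zero_of_star_mul_mul_eq_zero_s15 {a x : A} (ha : 0 ≤ a) (h : star x * a * x = 0) :
    a * x = 0 := by
  have hsqrt : CFC.sqrt a * CFC.sqrt a = a := CFC.sqrt_mul_sqrt_self a ha
  have hsqrt_x : CFC.sqrt a * x = 0 := by
    rw [← CStarRing.star_mul_self_eq_zero_iff, star_mul,
      (CFC.sqrt_nonneg (a := a)).isSelfAdjoint.star_eq, mul_assoc, ← mul_assoc (CFC.sqrt a),
      hsqrt, ← mul_assoc, h]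
  rw [← hsqrt, mul_assoc, hsqrt_x, mul_zero]

lemma mul_eq_zero_of_le_of_mul_eq_zero_s15 {a b x : A} (ha : 0 ≤ a) (hab : a ≤ b)
    (hb : b * x = 0) : a * x = 0 := by
  refine mul_eq_zero_of_star_mul_mul_eq_zero_s15 ha (le_antisymm ?_ (star_left_conjugate_nonneg ha x))
  calc star x * a * x ≤ star x * b * x := star_left_conjugate_le_conjugate hab x
    _ = 0 := by rw [mul_assoc, hb, mul_zero]

lemma exists_nonneg_forall_mul_eq_zero {a : ℕ → A} (ha : ∀ m, 0 ≤ a m) :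
    ∃ g : A, 0 ≤ g ∧ ∀ (m : ℕ) (x : A), g * x = 0 → a m * x = 0 := by
  set c : ℕ → ℝ := fun m => (1 / 2 : ℝ) ^ m / (1 + ‖a m‖)
  have hc : ∀ m, 0 < c m := fun m => by positivity
  have hca : ∀ m, 0 ≤ c m • a m := fun m => smul_nonneg (hc m).le (ha m)
  refine ⟨∑' m, c m • a m, tsum_nonneg hca, fun m x hx => ?_⟩
  have hle : c m • a m ≤ ∑' n, c n • a n :=
    (summable_geometric_normalized_smul a).le_tsum m fun n _ => hca n
  have hcax : c m • (a m * x) = 0 := by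
    rw [← smul_mul_assoc]
    exact mul_eq_zero_of_le_of_mul_eq_zero_s15 (hca m) hle hx
  exact (smul_eq_zero_iff_right (hc m).ne').mp hcax

end CStarAlgebra

/-- Given a sequence of states on a C*-algebra (in which every state admits a positive
support element), there is a single positive element which is a common support. -/
theorem exists_common_support {A : Type*} [NonUnitalCStarAlgebra A]
    [PartialOrder A] [StarOrderedRing A]
    (hsupp : ∀ φ : A →L[ℂ] ℂ, IsState φ →
      ∃ g : A, 0 ≤ g ∧ ∀ x : A, g * x = 0 → φ x = 0)
    (φ : ℕ → A →L[ℂ] ℂ) (hφ : ∀ m : ℕ, IsState (φ m)) :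
    ∃ g : A, 0 ≤ g ∧ ∀ (m : ℕ) (x : A), g * x = 0 → φ m x = 0 := by
  choose a ha_nonneg ha_supp using fun m => hsupp (φ m) (hφ m)
  obtain ⟨g, hg_nonneg, hg⟩ := exists_nonneg_forall_mul_eq_zero ha_nonneg
  exact ⟨g, hg_nonneg, fun m x hx => ha_supp m x (hg m x hx)⟩
end
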